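/- Let Z ∈ ℝ^{q×p}, w₀ ∈ ℝ^{1×p}, u ∈ ℝ^{q}, and define for α > 0 the problem: maximize over ‖b‖₂ ≤ α the objective F_α(b) = ‖Z(w₀ + b)ᵀ‖₂² + 2 uᵀ Z (w₀ + b)ᵀ − ‖Z w₀ᵀ‖₂² − 2uᵀZw₀ᵀ. Suppose Zᵀu ≠ 0, and suppose additionally that Z = Z(α) scales linearly in α (Z(α) = α Z*). Then any maximizer b*(α) satisfies lim_{α→0⁺} b*(α)/‖b*(α)‖₂ = (uᵀZ)ᵀ/‖(uᵀZ)ᵀ‖₂ (a direction independent of α), and ‖b*(α)‖₂/α → 1. -/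

import Mathlib

open RealInnerProductSpace

/-- Matrix–vector multiplication landing in Euclidean space. -/
noncomputable def mulVecE {q p : ℕ} (Z : Matrix (Fin q) (Fin p) ℝ)
    (x : EuclideanSpace ℝ (Fin p)) : EuclideanSpace ℝ (Fin q) :=
  WithLp.toLp 2 (fun i => ∑ j, Z i j * x j)

lemma mulVecE_add {q p : ℕ} (Z : Matrix (Fin q) (Fin p) ℝ) (x y : EuclideanSpace ℝ (Fin p)) :
    mulVecE Z (x + y) = mulVecE Z x + mulVecE Z y := by
  ext i
  simp [mulVecE, mul_add, Finset.sum_add_distrib, PiLp.add_apply]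

lemma mulVecE_smul {q p : ℕ} (Z : Matrix (Fin q) (Fin p) ℝ) (c : ℝ) (x : EuclideanSpace ℝ (Fin p)) :
    mulVecE Z (c • x) = c • mulVecE Z x := by
  ext i
  simp only [mulVecE, PiLp.toLp_apply, PiLp.smul_apply, smul_eq_mul, Finset.mul_sum]
  exact Finset.sum_congr rfl fun j _ => by ring

lemma smul_mulVecE {q p : ℕ} (c : ℝ) (Z : Matrix (Fin q) (Fin p) ℝ) (x : EuclideanSpace ℝ (Fin p)) :
    mulVecE (c • Z) x = c • mulVecE Z x := by
  ext i
  simp [mulVecE, PiLp.smul_apply, Finset.mul_sum, Matrix.smul_apply, mul_assoc]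

lemma inner_mulVecE {q p : ℕ} (Z : Matrix (Fin q) (Fin p) ℝ) (u : EuclideanSpace ℝ (Fin q))
    (x : EuclideanSpace ℝ (Fin p)) : ⟪u, mulVecE Z x⟫ = ⟪mulVecE Z.transpose u, x⟫ := by
  simp only [PiLp.inner_apply, RCLike.inner_apply, conj_trivial, mulVecE, PiLp.toLp_apply,
    Matrix.transpose_apply, Finset.mul_sum, Finset.sum_mul]
  rw [Finset.sum_comm]
  exact Finset.sum_congr rfl fun i _ => Finset.sum_congr rfl fun j _ => by ring
lemma direction_bound {E : Type*} [NormedAddCommGroup E] [InnerProductSpace ℝ E]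
    (v b : E) (α K : ℝ) (hα : 0 < α) (hb : ‖b‖ ≤ α) (hKα : K * α < ‖v‖)
    (hinner : α * ‖v‖ - K * α ^ 2 ≤ ⟪v, b⟫) :
    ‖‖b‖⁻¹ • b - ‖v‖⁻¹ • v‖ ^ 2 ≤ 2 * (K * α / ‖v‖) ∧ |‖b‖ / α - 1| ≤ K * α / ‖v‖ := by
  have hpos : 0 < α * ‖v‖ - K * α ^ 2 := by nlinarith
  have hib : 0 < ⟪v, b⟫ := lt_of_lt_of_le hpos hinner
  have hcs : ⟪v, b⟫ ≤ ‖v‖ * ‖b‖ := real_inner_le_norm v b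
  have hbpos : 0 < ‖b‖ := by nlinarith [norm_nonneg v, norm_nonneg b]
  have hvpos : 0 < ‖v‖ := by nlinarith [norm_nonneg v, norm_nonneg b]
  have hK : 0 ≤ K := by
    nlinarith [hinner.trans hcs, mul_le_mul_of_nonneg_left hb hvpos.le, mul_pos hα hα]
  have h1 : (α * ‖v‖ - K * α ^ 2) / ‖v‖ ≤ ‖b‖ := by
    rw [div_le_iff₀ hvpos]; nlinarith
  have h2 : 1 - K * α / ‖v‖ ≤ ‖b‖ / α := by
    rw [le_div_iff₀ hα]
    calc (1 - K * α / ‖v‖) * α = (α * ‖v‖ - K * α ^ 2) / ‖v‖ := by field_simp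
      _ ≤ ‖b‖ := h1
  have habs : |‖b‖ / α - 1| ≤ K * α / ‖v‖ := by
    rw [abs_le]
    constructor
    · linarith
    · have hle1 : ‖b‖ / α ≤ 1 := (div_le_one hα).mpr hb
      have : 0 ≤ K * α / ‖v‖ := by positivity
      linarith
  refine ⟨?_, habs⟩
  have key : (1 - K * α / ‖v‖) * (‖b‖ * ‖v‖) ≤ ⟪v, b⟫ := by
    have e : (1 - K * α / ‖v‖) * (‖b‖ * ‖v‖) = ‖b‖ * (‖v‖ - K * α) := by
      field_simp
    rw [e]
    nlinarith [mul_nonneg (sub_nonneg.mpr hb) (sub_nonneg.mpr hKα.le)]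
  have hbv : 1 - K * α / ‖v‖ ≤ ⟪‖b‖⁻¹ • b, ‖v‖⁻¹ • v⟫ := by
    have e2 : ⟪‖b‖⁻¹ • b, ‖v‖⁻¹ • v⟫ = ⟪v, b⟫ / (‖b‖ * ‖v‖) := by
      rw [real_inner_smul_left, real_inner_smul_right, real_inner_comm]
      field_simp
    rw [e2, le_div_iff₀ (mul_pos hbpos hvpos)]
    exact key
  have hnb : ‖‖b‖⁻¹ • b‖ = 1 := by
    rw [norm_smul, norm_inv, norm_norm, inv_mul_cancel₀ hbpos.ne']
  have hnv : ‖‖v‖⁻¹ • v‖ = 1 := by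
    rw [norm_smul, norm_inv, norm_norm, inv_mul_cancel₀ hvpos.ne']
  rw [norm_sub_sq_real, hnb, hnv]
  nlinarith [hbv]

lemma mulVecE_bound {q p : ℕ} (Zstar : Matrix (Fin q) (Fin p) ℝ) :
    ∃ C : ℝ, 0 ≤ C ∧ ∀ x, ‖mulVecE Zstar x‖ ≤ C * ‖x‖ := by
  let L : EuclideanSpace ℝ (Fin p) →ₗ[ℝ] EuclideanSpace ℝ (Fin q) :=
    { toFun := mulVecE Zstar
      map_add' := mulVecE_add Zstar
      map_smul' := fun c x => mulVecE_smul Zstar c x }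
  exact ⟨‖LinearMap.toContinuousLinearMap L‖, norm_nonneg _,
    fun x => (LinearMap.toContinuousLinearMap L).le_opNorm x⟩

/-- core of Theorem 2: with `Z(α) = α Z*`, `Zᵀu ≠ 0`, and `b*(α)` any
maximizer over `‖b‖ ≤ α` of
`F_α(b) = ‖Z(α)(w₀+b)ᵀ‖² + 2 uᵀZ(α)(w₀+b)ᵀ − ‖Z(α)w₀ᵀ‖² − 2uᵀZ(α)w₀ᵀ`,
the normalized maximizer converges to `normalize((uᵀZ*)ᵀ) = Z*ᵀu/‖Z*ᵀu‖` and
`‖b*(α)‖/α → 1` as `α → 0⁺`. -/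
theorem stmt_14 (q p : ℕ)
    (Zstar : Matrix (Fin q) (Fin p) ℝ)
    (w₀ : EuclideanSpace ℝ (Fin p)) (u : EuclideanSpace ℝ (Fin q))
    (hZu : mulVecE Zstar.transpose u ≠ 0)
    (Z : ℝ → Matrix (Fin q) (Fin p) ℝ) (hZ : ∀ α, Z α = α • Zstar)
    (F : ℝ → EuclideanSpace ℝ (Fin p) → ℝ)
    (hF : ∀ α b, F α b =
      ‖mulVecE (Z α) (w₀ + b)‖ ^ 2 + 2 * ⟪u, mulVecE (Z α) (w₀ + b)⟫
        - ‖mulVecE (Z α) w₀‖ ^ 2 - 2 * ⟪u, mulVecE (Z α) w₀⟫)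
    (bstar : ℝ → EuclideanSpace ℝ (Fin p))
    (hmax : ∀ α > 0, bstar α ∈ Metric.closedBall (0 : EuclideanSpace ℝ (Fin p)) α ∧
      IsMaxOn (F α) (Metric.closedBall (0 : EuclideanSpace ℝ (Fin p)) α) (bstar α)) :
    Filter.Tendsto (fun α => ‖bstar α‖⁻¹ • bstar α) (nhdsWithin 0 (Set.Ioi 0))
      (nhds (‖mulVecE Zstar.transpose u‖⁻¹ • mulVecE Zstar.transpose u)) ∧
    Filter.Tendsto (fun α => ‖bstar α‖ / α) (nhdsWithin 0 (Set.Ioi 0)) (nhds 1) := by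
  set v : EuclideanSpace ℝ (Fin p) := mulVecE Zstar.transpose u with hv_def
  have hv : 0 < ‖v‖ := norm_pos_iff.mpr hZu
  obtain ⟨C, hC0, hCb⟩ := mulVecE_bound Zstar
  -- the quadratic remainder bound
  obtain ⟨K, hK, hD⟩ : ∃ K : ℝ, 0 ≤ K ∧ ∀ (α : ℝ) (x : EuclideanSpace ℝ (Fin p)),
      0 < α → α ≤ 1 → ‖x‖ ≤ α →
      |‖mulVecE Zstar (w₀ + x)‖ ^ 2 - ‖mulVecE Zstar w₀‖ ^ 2| ≤ K * α := by
    refine ⟨2 * ‖mulVecE Zstar w₀‖ * C + C ^ 2, by positivity, ?_⟩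
    intro α x hα hα1 hx
    rw [mulVecE_add Zstar w₀ x, norm_add_sq_real]
    have h1 := abs_real_inner_le_norm (mulVecE Zstar w₀) (mulVecE Zstar x)
    have h2 : ‖mulVecE Zstar x‖ ≤ C * α :=
      (hCb x).trans (mul_le_mul_of_nonneg_left hx hC0)
    have h3 : (0:ℝ) ≤ ‖mulVecE Zstar x‖ := norm_nonneg _
    have h4 : (0:ℝ) ≤ ‖mulVecE Zstar w₀‖ := norm_nonneg _
    rw [abs_le] at h1 ⊢
    constructor <;>
      nlinarith [mul_le_mul_of_nonneg_left h2 h4, mul_self_le_mul_self h3 h2,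
        mul_nonneg (mul_nonneg hC0 hC0) hα.le, mul_nonneg hC0 hα.le,
        mul_nonneg (mul_nonneg h4 hC0) hα.le]
  -- rewrite F
  have hub' : ∀ b : EuclideanSpace ℝ (Fin p), ⟪u, mulVecE Zstar b⟫ = ⟪v, b⟫ := by
    intro b; rw [inner_mulVecE, ← hv_def]
  have hFb : ∀ (α : ℝ) (b : EuclideanSpace ℝ (Fin p)), F α b =
      α ^ 2 * (‖mulVecE Zstar (w₀ + b)‖ ^ 2 - ‖mulVecE Zstar w₀‖ ^ 2) + 2 * α * ⟪v, b⟫ := by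
    intro α b
    have hub : ⟪u, mulVecE Zstar (w₀ + b)⟫ = ⟪u, mulVecE Zstar w₀⟫ + ⟪v, b⟫ := by
      rw [mulVecE_add, inner_add_right, hub', hub']
    rw [hF, hZ, smul_mulVecE, smul_mulVecE, norm_smul, norm_smul,
      real_inner_smul_right, real_inner_smul_right, hub, Real.norm_eq_abs,
      mul_pow, mul_pow, sq_abs]
    ring
  obtain ⟨δ, hδ, hδ1, hδv⟩ : ∃ δ : ℝ, 0 < δ ∧ δ ≤ 1 ∧ δ ≤ ‖v‖ / (K + 1) :=
    ⟨min 1 (‖v‖ / (K + 1)), lt_min one_pos (by positivity), min_le_left _ _, min_le_right _ _⟩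
  -- key estimate
  have hkey : ∀ α ∈ Set.Ioo (0:ℝ) δ,
      ‖bstar α‖ ≤ α ∧ K * α < ‖v‖ ∧ α * ‖v‖ - K * α ^ 2 ≤ ⟪v, bstar α⟫ := by
    rintro α ⟨hα, hαδ⟩
    have hα1 : α ≤ 1 := (hαδ.trans_le hδ1).le
    have hαv : α < ‖v‖ / (K + 1) := hαδ.trans_le hδv
    have hKα : K * α < ‖v‖ := by
      have h := (lt_div_iff₀ (by positivity : (0:ℝ) < K + 1)).mp hαv
      nlinarith
    obtain ⟨hball, hM⟩ := hmax α hα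
    have hb : ‖bstar α‖ ≤ α := by rwa [Metric.mem_closedBall, dist_zero_right] at hball
    refine ⟨hb, hKα, ?_⟩
    have hcn : ‖α • (‖v‖⁻¹ • v)‖ = α := by
      rw [norm_smul, norm_smul, norm_inv, norm_norm, inv_mul_cancel₀ hv.ne',
        Real.norm_eq_abs, abs_of_pos hα, mul_one]
    have hcmem : α • (‖v‖⁻¹ • v) ∈ Metric.closedBall (0 : EuclideanSpace ℝ (Fin p)) α := by
      rw [Metric.mem_closedBall, dist_zero_right, hcn]
    have hle : F α (α • (‖v‖⁻¹ • v)) ≤ F α (bstar α) := hM hcmem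
    rw [hFb, hFb] at hle
    have hvc : ⟪v, α • (‖v‖⁻¹ • v)⟫ = α * ‖v‖ := by
      rw [real_inner_smul_right, real_inner_smul_right, real_inner_self_eq_norm_sq,
        pow_two, inv_mul_cancel_left₀ hv.ne']
    rw [hvc] at hle
    have hDc := hD α (α • (‖v‖⁻¹ • v)) hα hα1 (le_of_eq hcn)
    have hDb := hD α (bstar α) hα hα1 hb
    rw [abs_le] at hDc hDb
    nlinarith [hle, mul_pos hα hα, mul_le_mul_of_nonneg_left hDc.1 (sq_nonneg α),
      mul_le_mul_of_nonneg_left hDb.2 (sq_nonneg α)]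
  have hev : ∀ᶠ α in nhdsWithin (0:ℝ) (Set.Ioi 0), α ∈ Set.Ioo (0:ℝ) δ :=
    Ioo_mem_nhdsGT_of_mem ⟨le_refl 0, hδ⟩
  have hlin : Filter.Tendsto (fun α : ℝ => K * α / ‖v‖) (nhdsWithin 0 (Set.Ioi 0)) (nhds 0) := by
    have hc : Continuous fun α : ℝ => K * α / ‖v‖ := (continuous_const.mul continuous_id).div_const _
    have := (hc.tendsto 0).mono_left (nhdsWithin_le_nhds (s := Set.Ioi (0:ℝ)))
    simpa using this
  constructor
  · rw [tendsto_iff_norm_sub_tendsto_zero]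
    refine squeeze_zero' (g := fun α => Real.sqrt (2 * (K * α / ‖v‖)))
      (Filter.Eventually.of_forall fun α => norm_nonneg _)
      (hev.mono fun α hα => ?_) ?_
    · obtain ⟨hb, hKα, hinner⟩ := hkey α hα
      obtain ⟨hsq, -⟩ := direction_bound v (bstar α) α K hα.1 hb hKα hinner
      rw [← Real.sqrt_sq (norm_nonneg (‖bstar α‖⁻¹ • bstar α - ‖v‖⁻¹ • v))]
      exact Real.sqrt_le_sqrt hsq
    · have h2 : Filter.Tendsto (fun α : ℝ => 2 * (K * α / ‖v‖)) (nhdsWithin 0 (Set.Ioi 0))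
          (nhds 0) := by simpa using hlin.const_mul 2
      have h3 := (Real.continuous_sqrt.tendsto 0).comp h2
      rw [Real.sqrt_zero] at h3
      exact h3
  · rw [tendsto_iff_norm_sub_tendsto_zero]
    refine squeeze_zero' (Filter.Eventually.of_forall fun α => norm_nonneg _)
      (hev.mono fun α hα => ?_) hlin
    obtain ⟨hb, hKα, hinner⟩ := hkey α hα
    obtain ⟨-, habs⟩ := direction_bound v (bstar α) α K hα.1 hb hKα hinner
    simpa [Real.norm_eq_abs] using habs
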